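/- Let k ≥ 1, c ≥ 1 be integers and let a₀, a₁, a₂, a₃ ∈ 𝔽_{2^k} with a₀ ≠ 0. Define g : 𝔽_{2^k} × 𝔽_{2^k} → 𝔽₂ by g(x, y) = Tr(a₀·x·y + a₁·x + a₂·y + a₃). Viewing 𝔽_{2^k} × 𝔽_{2^k} as an 𝔽₂-vector space of dimension 2k, g is an affine extractor for dimension k + c with bias at most 2^{−c}. In particular, g is an affine disperser for dimension k + 1. -/

import Mathlib

open scoped Classical

/-- The bias of a Boolean function `f` restricted to a (nonempty) subset `S` of its
finite domain: `|(1/|S|) ∑_{x ∈ S} (-1)^{f(x)}|`. -/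
noncomputable def biasSet {E : Type*} [Fintype E] (f : E → ZMod 2) (S : Set E) : ℝ :=
  |∑ x ∈ S.toFinset, (-1 : ℝ) ^ (f x).val| / (S.toFinset.card : ℝ)

/-!
Put `B(s, u) = Tr(a₀ (s₁ u₂ + s₂ u₁))`. Then `g(s + u) = g(s) + B(s, u) + q(u)` for a function
`q` that does not depend on `s`, and `B` is a nondegenerate bilinear form on `F × F` over `𝔽₂`
because the trace form of `F/𝔽₂` is nondegenerate and `a₀ ≠ 0`. Squaring the character sum of
`g` over a coset `b + V` and substituting `w = v + u` in the double sum gives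
`∑_{u ∈ V} ±∑_{v ∈ V} (-1)^{B(v, u)}`, and the inner sum vanishes unless `u ∈ V^⊥`. Hence
`bias² ≤ |V^⊥| / |V| = 2^{2k - 2 dim V} ≤ 4^{-c}`. A function constant on a coset has bias `1`,
which exceeds `2^{-1}`.
-/

open Module LinearMap Finset

def signChar : AddChar (ZMod 2) ℝ where
  toFun a := (-1) ^ a.val
  map_zero_eq_one' := by simp
  map_add_eq_mul' a b := by rw [ZMod.val_add, ← neg_one_pow_eq_pow_mod_two, pow_add]

theorem signChar_apply (a : ZMod 2) : signChar a = (-1) ^ a.val := rfl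

theorem signChar_one : signChar 1 = -1 := by
  rw [signChar_apply, ZMod.val_one, pow_one]

theorem signChar_mul_self (a : ZMod 2) : signChar a * signChar a = 1 := by
  rw [← AddChar.map_add_eq_mul, CharTwo.add_self_eq_zero, AddChar.map_zero_eq_one]

theorem signChar_le_one (a : ZMod 2) : signChar a ≤ 1 :=
  (le_abs_self _).trans (abs_neg_one_pow _).le

theorem sum_signChar_linearMap_eq_zero {W : Type*} [AddCommGroup W] [Module (ZMod 2) W] [Fintype W]
    {L : W →ₗ[ZMod 2] ZMod 2} (hL : L ≠ 0) : ∑ w, signChar (L w) = 0 := by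
  obtain ⟨w, hw⟩ : ∃ w, L w ≠ 0 := by
    by_contra! h; exact hL (LinearMap.ext h)
  refine (AddChar.sum_eq_zero_iff_ne_zero
    (ψ := signChar.compAddMonoidHom L.toAddMonoidHom)).2 (AddChar.ne_zero_iff.2 ⟨w, ?_⟩)
  have hw₁ : L w = 1 := by revert hw; generalize L w = x; decide +revert
  rw [AddChar.compAddMonoidHom_apply, LinearMap.toAddMonoidHom_coe, hw₁, signChar_one]
  norm_num

theorem biasSet_eq_one_of_forall_eq {E : Type*} [Fintype E] {f : E → ZMod 2} {S : Set E}
    (hS : S.Nonempty) (hconst : ∀ x ∈ S, ∀ y ∈ S, f x = f y) : biasSet f S = 1 := by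
  obtain ⟨x₀, hx₀⟩ := hS
  have hsum : ∑ x ∈ S.toFinset, (-1 : ℝ) ^ (f x).val = #S.toFinset * (-1) ^ (f x₀).val := by
    rw [Finset.sum_congr rfl fun x hx => by rw [hconst x (Set.mem_toFinset.mp hx) x₀ hx₀],
      Finset.sum_const, nsmul_eq_mul]
  have hcard : (#S.toFinset : ℝ) ≠ 0 := by
    exact_mod_cast (Finset.card_pos.mpr ⟨x₀, Set.mem_toFinset.mpr hx₀⟩).ne'
  rw [biasSet, hsum, abs_mul, abs_neg_one_pow, mul_one, Nat.abs_cast, div_self hcard]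

theorem biasSet_image_add_submodule {R E : Type*} [Semiring R] [AddCommGroup E] [Module R E]
    [Fintype E] (f : E → ZMod 2) (V : Submodule R E) (b : E) :
    biasSet f ((fun v => v + b) '' (V : Set E)) =
      |∑ v : V, signChar (f (v + b))| / Nat.card V := by
  have hinj : Function.Injective fun v : V => (v : E) + b :=
    (add_left_injective b).comp Subtype.val_injective
  have hrange : (fun v => v + b) '' (V : Set E) = Set.range fun v : V => (v : E) + b :=
    Set.image_eq_range _ _
  rw [hrange, biasSet, Set.toFinset_range, Finset.sum_image fun x _ y _ h => hinj h,
    Finset.card_image_of_injective _ hinj, Finset.card_univ, Nat.card_eq_fintype_card]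
  rfl

section CharacterSum

variable {E : Type*} [AddCommGroup E] [Module (ZMod 2) E] [Fintype E]

theorem sum_signChar_bilinForm_eq_ite (B : LinearMap.BilinForm (ZMod 2) E)
    (V : Submodule (ZMod 2) E) (u : E) :
    ∑ v : V, signChar (B v u) = if u ∈ B.orthogonal V then (Nat.card V : ℝ) else 0 := by
  split_ifs with hu
  · have hortho (v : V) : B v u = 0 := hu v v.2
    simp [hortho, Nat.card_eq_fintype_card]
  · refine sum_signChar_linearMap_eq_zero (L := B.flip u ∘ₗ V.subtype) fun h => ?_
    exact hu fun v hv => LinearMap.congr_fun h ⟨v, hv⟩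

theorem sq_sum_signChar_add_le {B : LinearMap.BilinForm (ZMod 2) E} {f q : E → ZMod 2}
    (hf : ∀ s u, f (s + u) = f s + B s u + q u) (V : Submodule (ZMod 2) E) (b : E) :
    (∑ v : V, signChar (f (v + b))) ^ 2 ≤ Nat.card V * Nat.card (B.orthogonal V) := by
  have hpair (v u : V) : signChar (f (v + b)) * signChar (f (↑(v + u) + b)) =
      signChar (B v u) * signChar (B b u + q u) := by
    have hsplit : f (↑(v + u) + b) = f (v + b) + (B v u + (B b u + q u)) := by
      rw [Submodule.coe_add, add_right_comm, hf, map_add, LinearMap.add_apply]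
      ring
    rw [hsplit, AddChar.map_add_eq_mul, AddChar.map_add_eq_mul]
    linear_combination signChar (B v u) * signChar (B b u + q u) * signChar_mul_self (f (v + b))
  have hexpand : (∑ v : V, signChar (f (v + b))) ^ 2 =
      ∑ u : V, (∑ v : V, signChar (B v u)) * signChar (B b u + q u) := by
    calc _ = ∑ v : V, ∑ u : V, signChar (B v u) * signChar (B b u + q u) := by
          rw [sq, Fintype.sum_mul_sum]
          exact Fintype.sum_congr _ _ fun v =>
            (Fintype.sum_equiv (Equiv.addLeft v) _ _ fun u => (hpair v u).symm).symm
      _ = _ := by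
          rw [Finset.sum_comm]
          simp_rw [Finset.sum_mul]
  have hcard : #{u : V | ↑u ∈ B.orthogonal V} ≤ Nat.card (B.orthogonal V) := by
    rw [← Fintype.card_subtype, ← Nat.card_eq_fintype_card]
    exact Nat.card_le_card_of_injective (fun u => ⟨u.1, u.2⟩)
      fun x y h => by ext; exact (Subtype.ext_iff.mp h :)
  calc (∑ v : V, signChar (f (v + b))) ^ 2
      = ∑ u : V, (if ↑u ∈ B.orthogonal V then (Nat.card V : ℝ) else 0) *
          signChar (B b u + q u) := by
        simp_rw [hexpand, sum_signChar_bilinForm_eq_ite]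
    _ ≤ ∑ u : V, if ↑u ∈ B.orthogonal V then (Nat.card V : ℝ) else 0 :=
        Finset.sum_le_sum fun u _ =>
          mul_le_of_le_one_right (by positivity) (signChar_le_one _)
    _ = Nat.card V * #{u : V | ↑u ∈ B.orthogonal V} := by
        rw [Finset.sum_ite, Finset.sum_const_zero, add_zero, Finset.sum_const, nsmul_eq_mul,
          mul_comm]
    _ ≤ Nat.card V * Nat.card (B.orthogonal V) := by gcongr

theorem biasSet_image_add_submodule_le {B : LinearMap.BilinForm (ZMod 2) E} {f q : E → ZMod 2}
    (hB : B.Nondegenerate) (hf : ∀ s u, f (s + u) = f s + B s u + q u)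
    {V : Submodule (ZMod 2) E} {c : ℕ}
    (hV : finrank (ZMod 2) E + 2 * c ≤ 2 * finrank (ZMod 2) V) (b : E) :
    biasSet f ((fun v => v + b) '' (V : Set E)) ≤ 2⁻¹ ^ c := by
  set n := finrank (ZMod 2) E
  set d := finrank (ZMod 2) V
  have hdn : d ≤ n := Submodule.finrank_le V
  have hsq := sq_sum_signChar_add_le hf V b
  rw [natCard_eq_pow_finrank (K := ZMod 2) (V := V),
    natCard_eq_pow_finrank (K := ZMod 2) (V := B.orthogonal V),
    BilinForm.finrank_orthogonal hB, Nat.card_zmod] at hsq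
  have hbound : (2 : ℝ)⁻¹ ^ c * 2 ^ d = 2 ^ (d - c) := by
    rw [pow_sub₀ _ two_ne_zero (by omega), inv_pow, mul_comm]
  rw [biasSet_image_add_submodule, natCard_eq_pow_finrank (K := ZMod 2), Nat.card_zmod,
    div_le_iff₀ (by positivity), Nat.cast_pow, Nat.cast_ofNat, hbound]
  refine abs_le_of_sq_le_sq ?_ (by positivity)
  calc _ ≤ (2 : ℝ) ^ d * 2 ^ (n - d) := by exact_mod_cast hsq
    _ = 2 ^ (d + (n - d)) := (pow_add _ _ _).symm
    _ ≤ (2 ^ (d - c)) ^ 2 := by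
      rw [← pow_mul]
      exact pow_le_pow_right₀ one_le_two (by omega)

end CharacterSum

section TracePolarForm

variable (K : Type*) {F : Type*} [Field K] [Field F] [Algebra K F]

noncomputable def tracePolarForm (a : F) : LinearMap.BilinForm K (F × F) :=
  (Algebra.traceForm K F).compl₁₂ (mulLeft K a ∘ₗ fst K F F) (snd K F F) +
    (Algebra.traceForm K F).compl₁₂ (mulLeft K a ∘ₗ snd K F F) (fst K F F)

variable {K}

theorem tracePolarForm_apply (a : F) (s u : F × F) :
    tracePolarForm K a s u = Algebra.trace K F (a * (s.1 * u.2 + s.2 * u.1)) := by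
  simp [tracePolarForm, mul_add, mul_assoc]

theorem tracePolarForm_nondegenerate [FiniteDimensional K F] [Algebra.IsSeparable K F] {a : F}
    (ha : a ≠ 0) : (tracePolarForm K a).Nondegenerate := by
  have hsymm (s u : F × F) : tracePolarForm K a u s = tracePolarForm K a s u := by
    simp only [tracePolarForm_apply]
    ring_nf
  have hrefl : (tracePolarForm K a).IsRefl := fun s u h => (hsymm s u).trans h
  refine hrefl.nondegenerate_iff_separatingLeft.2 fun s hs => ?_
  have hsep := (traceForm_nondegenerate K F).1
  have h₁ : a * s.1 = 0 := hsep _ fun x => by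
    simpa [tracePolarForm_apply, mul_assoc] using hs (0, x)
  have h₂ : a * s.2 = 0 := hsep _ fun x => by
    simpa [tracePolarForm_apply, mul_assoc] using hs (x, 0)
  exact Prod.ext ((mul_eq_zero.mp h₁).resolve_left ha) ((mul_eq_zero.mp h₂).resolve_left ha)

theorem trace_add_eq_add_tracePolarForm {g : F × F → K} {a₀ a₁ a₂ a₃ : F}
    (hg : ∀ x y : F, g (x, y) = Algebra.trace K F (a₀ * x * y + a₁ * x + a₂ * y + a₃))
    (s u : F × F) :
    g (s + u) = g s + tracePolarForm K a₀ s u +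
      Algebra.trace K F (a₀ * u.1 * u.2 + a₁ * u.1 + a₂ * u.2) := by
  obtain ⟨x₁, x₂⟩ := s
  obtain ⟨y₁, y₂⟩ := u
  rw [Prod.mk_add_mk, hg, hg, tracePolarForm_apply, ← map_add, ← map_add]
  congr 1
  ring

end TracePolarForm

theorem finrank_zmod_eq_of_card_eq_pow {p : ℕ} [Fact p.Prime] {M : Type*} [AddCommGroup M]
    [Module (ZMod p) M] [Fintype M] {k : ℕ} (hM : Fintype.card M = p ^ k) :
    finrank (ZMod p) M = k := by
  have h := natCard_eq_pow_finrank (K := ZMod p) (V := M)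
  rw [Nat.card_eq_fintype_card, hM, Nat.card_zmod] at h
  exact (Nat.pow_right_injective (Fact.out : p.Prime).two_le h).symm

theorem trace_affine_extractor_general {k c : ℕ}
    {F : Type*} [Field F] [Fintype F] [Algebra (ZMod 2) F]
    (hF : Fintype.card F = 2 ^ k)
    (a0 a1 a2 a3 : F) (ha0 : a0 ≠ 0)
    (g : F × F → ZMod 2)
    (hg : ∀ x y : F,
      g (x, y) = Algebra.trace (ZMod 2) F (a0 * x * y + a1 * x + a2 * y + a3)) :
    (∀ (V : Submodule (ZMod 2) (F × F)) (b : F × F),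
      k + c ≤ Module.finrank (ZMod 2) V →
        biasSet g ((fun v => v + b) '' (V : Set (F × F))) ≤ (2 : ℝ)⁻¹ ^ c) ∧
    (∀ (V : Submodule (ZMod 2) (F × F)) (b : F × F),
      k + 1 ≤ Module.finrank (ZMod 2) V →
        ∃ x ∈ (fun v => v + b) '' (V : Set (F × F)),
          ∃ y ∈ (fun v => v + b) '' (V : Set (F × F)), g x ≠ g y) := by
  have hrank : finrank (ZMod 2) (F × F) = 2 * k := by
    rw [finrank_prod, finrank_zmod_eq_of_card_eq_pow hF, two_mul]
  have extractor (c' : ℕ) (V : Submodule (ZMod 2) (F × F)) (b : F × F)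
      (hV : k + c' ≤ finrank (ZMod 2) V) :
      biasSet g ((fun v => v + b) '' (V : Set (F × F))) ≤ 2⁻¹ ^ c' :=
    biasSet_image_add_submodule_le (tracePolarForm_nondegenerate ha0)
      (trace_add_eq_add_tracePolarForm hg) (by omega) b
  refine ⟨extractor c, fun V b hV => ?_⟩
  by_contra! hconst
  have hbias := extractor 1 V b hV
  rw [biasSet_eq_one_of_forall_eq (Set.Nonempty.image _ ⟨0, V.zero_mem⟩) hconst] at hbias
  norm_num at hbias

/-- Let `F = 𝔽_{2^k}` (with `k, c ≥ 1`) and `a₀, a₁, a₂, a₃ ∈ F` with `a₀ ≠ 0`.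
Define `g(x, y) = Tr(a₀·x·y + a₁·x + a₂·y + a₃)` on `F × F`, viewed as an
`𝔽₂`-vector space of dimension `2k`. Then `g` is an affine extractor for dimension
`k + c` with bias at most `2^{-c}`; in particular, `g` is an affine disperser for
dimension `k + 1`. -/
theorem trace_affine_extractor {k c : ℕ} (hk : 1 ≤ k) (hc : 1 ≤ c)
    {F : Type*} [Field F] [Fintype F] [Algebra (ZMod 2) F]
    (hF : Fintype.card F = 2 ^ k)
    (a0 a1 a2 a3 : F) (ha0 : a0 ≠ 0)
    (g : F × F → ZMod 2)
    (hg : ∀ x y : F,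
      g (x, y) = Algebra.trace (ZMod 2) F (a0 * x * y + a1 * x + a2 * y + a3)) :
    (∀ (V : Submodule (ZMod 2) (F × F)) (b : F × F),
      k + c ≤ Module.finrank (ZMod 2) V →
        biasSet g ((fun v => v + b) '' (V : Set (F × F))) ≤ (2 : ℝ)⁻¹ ^ c) ∧
    (∀ (V : Submodule (ZMod 2) (F × F)) (b : F × F),
      k + 1 ≤ Module.finrank (ZMod 2) V →
        ∃ x ∈ (fun v => v + b) '' (V : Set (F × F)),
          ∃ y ∈ (fun v => v + b) '' (V : Set (F × F)), g x ≠ g y) :=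
  trace_affine_extractor_general hF a0 a1 a2 a3 ha0 g hg
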